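/- Let (X,T) be a simple, properly ordered Bratteli-Vershik system. If (X,T) is weakly well timed, then every telescoping of (X,T) is weakly well timed. -/

import Mathlib

set_option autoImplicit false

/-- An ordered Bratteli diagram: finite nonempty vertex sets `V n`, a single root
vertex at level `0`, finite edge sets `E n` (edges from level `n` to level `n+1`,
multiple edges allowed), every vertex has an outgoing edge, every non-root vertex
an incoming edge, and the edges into each vertex carry a linear order, encoded by
the relation `elt` which relates only edges with the same target. -/
structure BDiagram where
  V : ℕ → Type
  E : ℕ → Type
  fintV : ∀ n, Fintype (V n)
  fintE : ∀ n, Fintype (E n)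
  nonV : ∀ n, Nonempty (V n)
  rootSubsingleton : Subsingleton (V 0)
  src : ∀ {n}, E n → V n
  tgt : ∀ {n}, E n → V (n + 1)
  hasOut : ∀ (n : ℕ) (v : V n), ∃ e : E n, src e = v
  hasIn : ∀ (n : ℕ) (v : V (n + 1)), ∃ e : E n, tgt e = v
  elt : ∀ {n}, E n → E n → Prop
  elt_tgt : ∀ (n : ℕ) (e f : E n), elt e f → tgt e = tgt f
  elt_irrefl : ∀ (n : ℕ) (e : E n), ¬ elt e e
  elt_trans : ∀ (n : ℕ) (e f g : E n), elt e f → elt f g → elt e g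
  elt_total : ∀ (n : ℕ) (e f : E n), tgt e = tgt f → e ≠ f → elt e f ∨ elt f e

namespace BDiagram

variable (B : BDiagram)

def castV {m n : ℕ} (h : m = n) (v : B.V m) : B.V n := h ▸ v

/-- An edge is minimal if no edge (into the same target) is below it. -/
def IsMinEdge {n : ℕ} (e : B.E n) : Prop := ∀ e' : B.E n, ¬ B.elt e' e

/-- An edge is maximal if no edge (into the same target) is above it. -/
def IsMaxEdge {n : ℕ} (e : B.E n) : Prop := ∀ e' : B.E n, ¬ B.elt e e'

/-- The space of infinite paths from the root. -/
def PathSpace : Type := { x : ∀ n, B.E n // ∀ n, B.tgt (x n) = B.src (x (n + 1)) }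

def IsMinPath (x : B.PathSpace) : Prop := ∀ n, B.IsMinEdge (x.1 n)

def IsMaxPath (x : B.PathSpace) : Prop := ∀ n, B.IsMaxEdge (x.1 n)

/-- Properly ordered: unique minimal and unique maximal path. -/
def ProperlyOrdered : Prop :=
  (∃! x : B.PathSpace, B.IsMinPath x) ∧ (∃! x : B.PathSpace, B.IsMaxPath x)

/-- The partial order on cofinal paths: `x < y` iff they eventually agree and at the
last disagreement the edge of `x` is below the edge of `y`. -/
def pathLT (x y : B.PathSpace) : Prop :=
  ∃ N : ℕ, B.elt (x.1 N) (y.1 N) ∧ ∀ n : ℕ, N < n → x.1 n = y.1 n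

/-- `T` is the Vershik map: each non-maximal path goes to its successor, and each
maximal path goes to a minimal path. -/
def IsVershik (T : B.PathSpace ≃ B.PathSpace) : Prop :=
  (∀ x : B.PathSpace, ¬ B.IsMaxPath x →
    B.pathLT x (T x) ∧ ∀ z : B.PathSpace, B.pathLT x z → ¬ B.pathLT z (T x)) ∧
  (∀ x : B.PathSpace, B.IsMaxPath x → B.IsMinPath (T x))

/-- `f` is a chain of consecutive edges on levels `[a, b)`. -/
def SegOn (f : ∀ i, B.E i) (a b : ℕ) : Prop :=
  ∀ i : ℕ, a ≤ i → i + 1 < b → B.tgt (f i) = B.src (f (i + 1))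

/-- Simplicity: some telescoping has complete connections between adjacent levels. -/
def Simple : Prop :=
  ∃ ns : ℕ → ℕ, StrictMono ns ∧ ns 0 = 0 ∧
    ∀ (l c : ℕ), ns (l + 1) = c + 1 →
      ∀ (v : B.V (ns l)) (w : B.V (c + 1)),
        ∃ f : ∀ i, B.E i, B.SegOn f (ns l) (c + 1) ∧ B.src (f (ns l)) = v ∧ B.tgt (f c) = w

/-- The natural (Cantor) topology on the path space, induced from the product of
the discrete topologies on the edge sets. -/
def pathTop : TopologicalSpace B.PathSpace :=
  TopologicalSpace.induced Subtype.val (@Pi.topologicalSpace ℕ B.E (fun _ => ⊥))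

/-- Integer iterates of a bijection of the path space. -/
def iterZ (T : B.PathSpace ≃ B.PathSpace) (m : ℤ) : B.PathSpace ≃ B.PathSpace :=
  (T : Equiv.Perm B.PathSpace) ^ m

/-- Two paths have the same `k`-coding: for every time `m` the initial segments of
`T^m x` and `T^m y` from the root to level `k` coincide. -/
def SameCoding (T : B.PathSpace ≃ B.PathSpace) (k : ℕ) (x y : B.PathSpace) : Prop :=
  ∀ (m : ℤ) (i : ℕ), i < k → ((B.iterZ T m) x).1 i = ((B.iterZ T m) y).1 i

/-- A depth `k` pair: distinct paths with the same `k`-coding but not the same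
`(k+1)`-coding. -/
def DepthPair (T : B.PathSpace ≃ B.PathSpace) (k : ℕ) (x y : B.PathSpace) : Prop :=
  x ≠ y ∧ B.SameCoding T k x y ∧ ¬ B.SameCoding T (k + 1) x y

/-- The pair `x, y` has a `j` cut: for some time `m`, both `T^m x` and `T^m y` are
minimal from the root into level `j`. -/
def HasCut (T : B.PathSpace ≃ B.PathSpace) (j : ℕ) (x y : B.PathSpace) : Prop :=
  ∃ m : ℤ, (∀ i : ℕ, i < j → B.IsMinEdge (((B.iterZ T m) x).1 i)) ∧
    (∀ i : ℕ, i < j → B.IsMinEdge (((B.iterZ T m) y).1 i))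

/-- Nonexpansive: for every `k ≥ 1` there are two distinct paths with the same
`k`-coding. -/
def Nonexpansive (T : B.PathSpace ≃ B.PathSpace) : Prop :=
  ∀ k : ℕ, 1 ≤ k → ∃ x y : B.PathSpace, x ≠ y ∧ B.SameCoding T k x y

/-- Well timed: for every `k ≥ 1` and every `j > k` there is a depth `k` pair with
a `j` cut. -/
def WellTimed (T : B.PathSpace ≃ B.PathSpace) : Prop :=
  ∀ k : ℕ, 1 ≤ k → ∀ j : ℕ, k < j →
    ∃ x y : B.PathSpace, B.DepthPair T k x y ∧ B.HasCut T j x y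

/-- Very well timed: for every `k ≥ 1` there is a depth `k` pair having a `j` cut
for every `j > k`. -/
def VeryWellTimed (T : B.PathSpace ≃ B.PathSpace) : Prop :=
  ∀ k : ℕ, 1 ≤ k →
    ∃ x y : B.PathSpace, B.DepthPair T k x y ∧ ∀ j : ℕ, k < j → B.HasCut T j x y

/-- Weakly well timed: for infinitely many `k ≥ 1`, for every `j > k` there is a
depth `k` pair with a `j` cut. -/
def WeaklyWellTimed (T : B.PathSpace ≃ B.PathSpace) : Prop :=
  ∀ K : ℕ, ∃ k : ℕ, K ≤ k ∧ 1 ≤ k ∧ ∀ j : ℕ, k < j →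
    ∃ x y : B.PathSpace, B.DepthPair T k x y ∧ B.HasCut T j x y

/-- Untimed: for every `k ≥ 1` there is a `j > k` such that no depth `k` pair has a
`j` cut. -/
def Untimed (T : B.PathSpace ≃ B.PathSpace) : Prop :=
  ∀ k : ℕ, 1 ≤ k → ∃ j : ℕ, k < j ∧
    ∀ x y : B.PathSpace, B.DepthPair T k x y → ¬ B.HasCut T j x y

/-- Very untimed: for every `k ≥ 1`, no depth `k` pair has a `(k+1)` cut. -/
def VeryUntimed (T : B.PathSpace ≃ B.PathSpace) : Prop :=
  ∀ k : ℕ, 1 ≤ k →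
    ∀ x y : B.PathSpace, B.DepthPair T k x y → ¬ B.HasCut T (k + 1) x y

/-- Finite paths from the root to level `n`. -/
def FinPath (n : ℕ) : Type :=
  { f : (i : Fin n) → B.E i.val //
    ∀ (i : ℕ) (h : i + 1 < n), B.tgt (f ⟨i, by omega⟩) = B.src (f ⟨i + 1, h⟩) }

/-- The lexicographic (from the end) order on finite paths to level `n` induced by
the orders on the edges. -/
def finLT {n : ℕ} (p q : B.FinPath n) : Prop :=
  ∃ (N : ℕ) (h : N < n), B.elt (p.1 ⟨N, h⟩) (q.1 ⟨N, h⟩) ∧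
    ∀ (i : ℕ) (hi : i < n), N < i → p.1 ⟨i, hi⟩ = q.1 ⟨i, hi⟩

/-- The finite path `p` to level `n` ends at the vertex `v`. -/
def EndsAt {n : ℕ} (p : B.FinPath n) (v : B.V n) : Prop :=
  ∀ (m : ℕ) (h : n = m + 1), B.tgt (p.1 ⟨m, by omega⟩) = B.castV h v

/-- The initial segment of an infinite path, from the root to level `n`. -/
def pathInit (x : B.PathSpace) (n : ℕ) : B.FinPath n :=
  ⟨fun i => x.1 i.val, fun i _ => x.2 i⟩

/-- The vertex of an infinite path at level `n`. -/
def pathVert (x : B.PathSpace) (n : ℕ) : B.V n := B.src (x.1 n)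

theorem pathInit_endsAt (x : B.PathSpace) (n : ℕ) :
    B.EndsAt (B.pathInit x n) (B.pathVert x n) := by
  intro m h
  subst h
  exact x.2 m

/-- Truncation of a finite path to a lower level. -/
def truncTo {n : ℕ} (k : ℕ) (hk : k ≤ n) (p : B.FinPath n) : B.FinPath k :=
  ⟨fun i => p.1 ⟨i.val, by omega⟩, fun i h => p.2 i (by omega)⟩

/-- Paths `x, x'` are `k`-equivalent at level `n`: there is an order isomorphism
between the sets of finite paths from the root into their level-`n` vertices which
preserves truncations to level `k` (equality of `k`-basic blocks) and which matches
the initial segment of `x` with the initial segment of `x'` (the "dot" is in the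
same place). -/
def KEquivAt (k n : ℕ) (x x' : B.PathSpace) : Prop :=
  ∃ φ : { p : B.FinPath n // B.EndsAt p (B.pathVert x n) } ≃
      { p : B.FinPath n // B.EndsAt p (B.pathVert x' n) },
    (∀ p q, B.finLT p.1 q.1 ↔ B.finLT (φ p).1 (φ q).1) ∧
    (∀ p (i : ℕ) (hik : i < k) (hin : i < n), ((φ p).1).1 ⟨i, hin⟩ = (p.1).1 ⟨i, hin⟩) ∧
    φ ⟨B.pathInit x n, B.pathInit_endsAt x n⟩ = ⟨B.pathInit x' n, B.pathInit_endsAt x' n⟩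

/-- Paths are `k`-equivalent: they agree from the root to level `k` and are
`k`-equivalent at every level `n > k`. -/
def KEquivPaths (k : ℕ) (x x' : B.PathSpace) : Prop :=
  (∀ i : ℕ, i < k → x.1 i = x'.1 i) ∧ ∀ n : ℕ, k < n → B.KEquivAt k n x x'

/-- Standard nonexpansive: for every `k ≥ 1` there is a pair of distinct
`k`-equivalent paths. -/
def SNE : Prop := ∀ k : ℕ, 1 ≤ k → ∃ x x' : B.PathSpace, x ≠ x' ∧ B.KEquivPaths k x x'

/-!  ### Telescoping  -/

theorem castV_eq_of_heq {m n : ℕ} (h : m = n) {v : B.V m} {w : B.V n} (hw : HEq v w) :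
    B.castV h v = w := by
  subst h
  exact eq_of_heq hw

theorem castV_heq {m n : ℕ} (h : m = n) (v : B.V m) : HEq (B.castV h v) v := by
  subst h
  rfl

theorem castV_inj {m n : ℕ} (h : m = n) {v w : B.V m}
    (hvw : B.castV h v = B.castV h w) : v = w := by
  subst h
  exact hvw

def castE {m n : ℕ} (h : m = n) (e : B.E m) : B.E n := h ▸ e

noncomputable def chainFrom (a : ℕ) (v : B.V a) : (i : ℕ) → B.E (a + i)
  | 0 => (B.hasOut a v).choose
  | i + 1 => (B.hasOut (a + i + 1) (B.tgt (chainFrom a v i))).choose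

theorem chainFrom_src_zero (a : ℕ) (v : B.V a) : B.src (B.chainFrom a v 0) = v :=
  (B.hasOut a v).choose_spec

theorem chainFrom_src_succ (a : ℕ) (v : B.V a) (i : ℕ) :
    B.src (B.chainFrom a v (i + 1)) = B.tgt (B.chainFrom a v i) :=
  (B.hasOut (a + i + 1) (B.tgt (B.chainFrom a v i))).choose_spec

noncomputable def chainTo (a : ℕ) : (j : ℕ) → (w : B.V (a + j + 1)) → (i : ℕ) → i ≤ j → B.E (a + i)
  | 0, w, i, _ => B.castE (by omega : a + 0 = a + i) (B.hasIn a w).choose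
  | j + 1, w, i, _ =>
      if h : i ≤ j then chainTo a j (B.src (B.hasIn (a + j + 1) w).choose) i h
      else B.castE (by omega : a + (j + 1) = a + i) (B.hasIn (a + j + 1) w).choose

theorem chainTo_tgt_last (a : ℕ) : ∀ (j : ℕ) (w : B.V (a + j + 1)),
    B.tgt (B.chainTo a j w j le_rfl) = w := by
  intro j w
  cases j with
  | zero =>
      simp only [chainTo]
      exact (B.hasIn a w).choose_spec
  | succ j =>
      simp only [chainTo]
      rw [dif_neg (by omega : ¬ j + 1 ≤ j)]
      exact (B.hasIn (a + j + 1) w).choose_spec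

theorem chainTo_chain (a : ℕ) : ∀ (j : ℕ) (w : B.V (a + j + 1)) (i : ℕ) (h : i + 1 ≤ j)
    (h' : i ≤ j), B.tgt (B.chainTo a j w i h') = B.src (B.chainTo a j w (i + 1) h) := by
  intro j
  induction j with
  | zero => intro w i h h'; omega
  | succ j ih =>
      intro w i h h'
      by_cases hij : i + 1 ≤ j
      · simp only [chainTo]
        rw [dif_pos (by omega : i ≤ j), dif_pos hij]
        exact ih _ i hij (by omega)
      · have hi : i = j := by omega
        subst hi
        simp only [chainTo]
        rw [dif_pos (le_refl i), dif_neg (by omega : ¬ i + 1 ≤ i)]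
        exact B.chainTo_tgt_last a i _


def TelE (a b : ℕ) : Type :=
  { f : (i : Fin (b - a)) → B.E (a + i.val) //
    ∀ (i : ℕ) (h : i + 1 < b - a), B.tgt (f ⟨i, by omega⟩) = B.src (f ⟨i + 1, h⟩) }

def telSrc {a b : ℕ} (hab : a < b) (f : B.TelE a b) : B.V a :=
  B.src (f.1 ⟨0, by omega⟩)

def telTgt {a b : ℕ} (hab : a < b) (f : B.TelE a b) : B.V b :=
  B.castV (by omega : a + (b - a - 1) + 1 = b) (B.tgt (f.1 ⟨b - a - 1, by omega⟩))

def telLT {a b : ℕ} (f g : B.TelE a b) : Prop :=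
  ∃ (N : ℕ) (h : N < b - a), B.elt (f.1 ⟨N, h⟩) (g.1 ⟨N, h⟩) ∧
    ∀ (i : ℕ) (hi : i < b - a), N < i → f.1 ⟨i, hi⟩ = g.1 ⟨i, hi⟩

noncomputable def Telescope (ns : ℕ → ℕ) (hmono : StrictMono ns) (h0 : ns 0 = 0) : BDiagram where
  V l := B.V (ns l)
  E l := B.TelE (ns l) (ns (l + 1))
  fintV l := B.fintV (ns l)
  fintE l := by
    classical
    letI : ∀ i : Fin (ns (l + 1) - ns l), Fintype (B.E (ns l + i.val)) := fun i => B.fintE _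
    exact Subtype.fintype _
  nonV l := B.nonV (ns l)
  rootSubsingleton := by show Subsingleton (B.V (ns 0)); rw [h0]; exact B.rootSubsingleton
  src {l} f := B.telSrc (hmono (Nat.lt_succ_self l)) f
  tgt {l} f := B.telTgt (hmono (Nat.lt_succ_self l)) f
  hasOut := by
    intro l v
    refine ⟨⟨fun i => B.chainFrom (ns l) v i.val,
      fun i h => (B.chainFrom_src_succ (ns l) v i).symm⟩, ?_⟩
    exact B.chainFrom_src_zero (ns l) v
  hasIn := by
    intro l w
    have hab : ns l < ns (l + 1) := hmono (Nat.lt_succ_self l)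
    have hj : ns l + (ns (l + 1) - ns l - 1) + 1 = ns (l + 1) := by omega
    refine ⟨⟨fun i => B.chainTo (ns l) (ns (l + 1) - ns l - 1) (B.castV hj.symm w) i.val
        (by omega), fun i h => B.chainTo_chain _ _ _ i (by omega) (by omega)⟩, ?_⟩
    show B.castV (by omega) (B.tgt (B.chainTo (ns l) (ns (l + 1) - ns l - 1)
      (B.castV hj.symm w) (ns (l + 1) - ns l - 1) (by omega))) = w
    rw [B.chainTo_tgt_last]
    exact B.castV_eq_of_heq _ (B.castV_heq _ w)
  elt {l} f g := B.telLT f g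
  elt_tgt := by
    rintro l f g ⟨N, hN, hlt, hgt⟩
    show B.telTgt _ f = B.telTgt _ g
    unfold telTgt
    refine congrArg (B.castV _) ?_
    rcases eq_or_lt_of_le (show N ≤ ns (l + 1) - ns l - 1 by omega) with h | h
    · subst h
      exact B.elt_tgt _ _ _ hlt
    · exact congrArg B.tgt (hgt _ (by omega) h)
  elt_irrefl := by
    rintro l f ⟨N, h, hlt, -⟩
    exact B.elt_irrefl _ _ hlt
  elt_trans := by
    rintro l f g h ⟨N₁, hN₁, hlt₁, hgt₁⟩ ⟨N₂, hN₂, hlt₂, hgt₂⟩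
    rcases lt_trichotomy N₁ N₂ with hc | hc | hc
    · exact ⟨N₂, hN₂, by rw [hgt₁ N₂ hN₂ hc]; exact hlt₂,
        fun i hi hN => (hgt₁ i hi (by omega)).trans (hgt₂ i hi hN)⟩
    · subst hc
      exact ⟨N₁, hN₁, B.elt_trans _ _ _ _ hlt₁ hlt₂,
        fun i hi hN => (hgt₁ i hi hN).trans (hgt₂ i hi hN)⟩
    · refine ⟨N₁, hN₁, ?_, fun i hi hN => (hgt₁ i hi hN).trans (hgt₂ i hi (by omega))⟩
      rw [← hgt₂ N₁ hN₁ hc]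
      exact hlt₁
  elt_total := by
    intro l f g htgt hne
    classical
    have hab : ns l < ns (l + 1) := hmono (Nat.lt_succ_self l)
    set b := ns (l + 1) - ns l with hb
    have hex : ∃ N, ∃ h : N < b, f.1 ⟨N, h⟩ ≠ g.1 ⟨N, h⟩ := by
      by_contra hco
      push_neg at hco
      exact hne (Subtype.ext (funext fun i => hco i.val i.isLt))
    set P : ℕ → Prop := fun N => ∃ h : N < b, f.1 ⟨N, h⟩ ≠ g.1 ⟨N, h⟩ with hP
    obtain ⟨N₀, hN₀⟩ := hex
    set N := Nat.findGreatest P b with hNdef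
    have hPN : P N := Nat.findGreatest_spec (le_of_lt hN₀.choose) hN₀
    have hafter : ∀ i (hi : i < b), N < i → f.1 ⟨i, hi⟩ = g.1 ⟨i, hi⟩ := by
      intro i hi hNi
      by_contra hcon
      exact Nat.findGreatest_is_greatest hNi (le_of_lt hi) ⟨hi, hcon⟩
    clear_value N
    obtain ⟨hNb, hNne⟩ := hPN
    have htgtN : B.tgt (f.1 ⟨N, hNb⟩) = B.tgt (g.1 ⟨N, hNb⟩) := by
      rcases eq_or_lt_of_le (show N ≤ b - 1 by omega) with h | h
      · -- N is the last index; use equality of targets of the composite edges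
        subst h
        exact B.castV_inj _ htgt
      · have h2 : f.1 ⟨N + 1, by omega⟩ = g.1 ⟨N + 1, by omega⟩ :=
          hafter (N + 1) (by omega) (by omega)
        rw [f.2 N (by omega), g.2 N (by omega), h2]
    rcases B.elt_total _ _ _ htgtN hNne with h | h
    · exact Or.inl ⟨N, hNb, h, hafter⟩
    · exact Or.inr ⟨N, hNb, h, fun i hi hN => (hafter i hi hN).symm⟩

def teleMap (ns : ℕ → ℕ) (hmono : StrictMono ns) (h0 : ns 0 = 0) (x : B.PathSpace) :
    (B.Telescope ns hmono h0).PathSpace :=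
  ⟨fun l => ⟨fun i => x.1 (ns l + i.val), fun i _ => x.2 (ns l + i)⟩, fun l => by
    have hab : ns l < ns (l + 1) := hmono (Nat.lt_succ_self l)
    have hm : ns l + (ns (l + 1) - ns l - 1) + 1 = ns (l + 1) := by omega
    show B.castV _ (B.tgt (x.1 (ns l + (ns (l + 1) - ns l - 1)))) = B.src (x.1 (ns (l + 1) + 0))
    rw [x.2 (ns l + (ns (l + 1) - ns l - 1))]
    exact B.castV_eq_of_heq _ (by rw [hm]; exact HEq.rfl)⟩


/-- Level `n+1` is uniformly ordered: there is a single nonempty block `P` of paths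
from the root to level `n` such that the `n`-basic block at every vertex at level
`n+1` is a positive power of `P`. -/
def UniformlyOrderedLevel (n : ℕ) : Prop :=
  ∃ (p : ℕ) (hp : 0 < p) (P : Fin p → B.FinPath n),
    ∀ v : B.V (n + 1), ∃ (m : ℕ), 0 < m ∧
      ∃ enum : Fin (m * p) ≃ { q : B.FinPath (n + 1) // B.EndsAt q v },
        (∀ i j : Fin (m * p), i < j ↔ B.finLT (enum i).1 (enum j).1) ∧
        (∀ i : Fin (m * p),
          B.truncTo n (Nat.le_succ n) (enum i).1 = P ⟨i.val % p, Nat.mod_lt _ hp⟩)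

/-- The ordinal label of an edge: its position in the linear order on the edges
into its target. -/
noncomputable def edgeLabel {n : ℕ} (e : B.E n) : ℕ := Nat.card { e' : B.E n // B.elt e' e }

/-- Deterministic: for every `n ≥ 1`, distinct edges with the same source at level
`n` have different ordinal labels. -/
def Deterministic : Prop :=
  ∀ n : ℕ, 1 ≤ n → ∀ e f : B.E n, B.src e = B.src f → e ≠ f →
    B.edgeLabel e ≠ B.edgeLabel f

end BDiagram

/-- A Bratteli–Vershik system: a simple, properly ordered ordered Bratteli diagram
together with its Vershik map. -/
structure BVSystem where
  B : BDiagram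
  T : B.PathSpace ≃ B.PathSpace
  proper : B.ProperlyOrdered
  simple : B.Simple
  vershik : B.IsVershik T

/-- Conjugacy of systems: an equivariant homeomorphism of the path spaces taking
minimal paths to minimal paths. -/
def Conjugate (S S' : BVSystem) : Prop :=
  ∃ φ : S.B.PathSpace ≃ S'.B.PathSpace,
    (@Continuous _ _ S.B.pathTop S'.B.pathTop φ) ∧
    (@Continuous _ _ S'.B.pathTop S.B.pathTop φ.symm) ∧
    (∀ x, φ (S.T x) = S'.T (φ x)) ∧
    (∀ x, S.B.IsMinPath x → S'.B.IsMinPath (φ x))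

/-- An odometer: a system whose diagram has exactly one vertex at every level. -/
def IsOdometer (S : BVSystem) : Prop := ∀ n, Subsingleton (S.B.V n)
/-
Telescoping gives a bijection between the path spaces which preserves and reflects the order
on cofinal paths. In a system with a Vershik map, a path is minimal (maximal) exactly when no
path lies below (above) it, so this bijection conjugates the two Vershik maps. Under the
conjugacy, having the same `l`-coding in the telescoping means having the same `n_l`-coding in
the original system, and an `n_j` cut becomes a `j` cut. Hence a depth `k` pair with an `n_j`
cut, where `n_l ≤ k < n_(l+1)`, is a depth `l` pair of the telescoping with a `j` cut, and
`l` is large when `k` is.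
-/

theorem Equiv.Perm.zpow_apply_of_semiconj {α β : Type*} (e : α ≃ β) {p : Equiv.Perm α}
    {p' : Equiv.Perm β} (h : ∀ a, p' (e a) = e (p a)) (m : ℤ) (a : α) :
    (p' ^ m) (e a) = e ((p ^ m) a) := by
  have hp' : p' = e.permCongrHom p :=
    Equiv.ext fun b => by simpa [Equiv.permCongr_apply] using h (e.symm b)
  rw [hp', ← map_zpow, Equiv.permCongrHom_coe, Equiv.permCongr_apply, Equiv.symm_apply_apply]

section Blocks

variable {ns : ℕ → ℕ}

theorem StrictMono.exists_le_and_lt_succ (hmono : StrictMono ns) (h0 : ns 0 = 0) (n : ℕ) :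
    ∃ l, ns l ≤ n ∧ n < ns (l + 1) := by
  induction n with
  | zero => exact ⟨0, h0.le, by simpa [h0] using hmono Nat.zero_lt_one⟩
  | succ n ih =>
    obtain ⟨l, h1, h2⟩ := ih
    by_cases h : n + 1 < ns (l + 1)
    · exact ⟨l, by omega, h⟩
    · exact ⟨l + 1, by omega, by have := hmono (lt_add_one (l + 1)); omega⟩

theorem StrictMono.exists_add_eq (hmono : StrictMono ns) (h0 : ns 0 = 0) (n : ℕ) :
    ∃ l i, i < ns (l + 1) - ns l ∧ ns l + i = n := by
  obtain ⟨l, h1, h2⟩ := hmono.exists_le_and_lt_succ h0 n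
  exact ⟨l, n - ns l, by omega, by omega⟩

theorem StrictMono.eq_of_le_of_lt_succ (hmono : StrictMono ns) {n l l' : ℕ}
    (h1 : ns l ≤ n) (h2 : n < ns (l + 1)) (h1' : ns l' ≤ n) (h2' : n < ns (l' + 1)) :
    l = l' := by
  by_contra hne
  rcases Nat.lt_or_gt_of_ne hne with h | h
  · have := hmono.monotone (show l + 1 ≤ l' by omega); omega
  · have := hmono.monotone (show l' + 1 ≤ l by omega); omega

theorem StrictMono.forall_lt_iff_forall_blocks (hmono : StrictMono ns) (h0 : ns 0 = 0)
    (P : ℕ → Prop) (r : ℕ) :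
    (∀ n, n < ns r → P n) ↔
      ∀ l, l < r → ∀ i, i < ns (l + 1) - ns l → P (ns l + i) := by
  refine ⟨fun h l hl i hi => h _ ?_, fun h n hn => ?_⟩
  · have := hmono.monotone (show l + 1 ≤ r by omega); omega
  · obtain ⟨l, i, hi, rfl⟩ := hmono.exists_add_eq h0 n
    exact h l (hmono.lt_iff_lt.1 (by omega)) i hi

end Blocks

namespace BDiagram

variable (B : BDiagram)

def IsSuccessor (x y : B.PathSpace) : Prop :=
  B.pathLT x y ∧ ∀ z, B.pathLT x z → ¬ B.pathLT z y

variable {B}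

theorem pathLT_or_pathLT_of_ne {x y : B.PathSpace} (hne : x ≠ y) {M : ℕ}
    (hM : ∀ n, M < n → x.1 n = y.1 n) : B.pathLT x y ∨ B.pathLT y x := by
  classical
  obtain ⟨n₀, hn₀⟩ : ∃ n, x.1 n ≠ y.1 n := by
    by_contra! h
    exact hne (Subtype.ext (funext h))
  have hn₀M : n₀ ≤ M := by
    by_contra! h
    exact hn₀ (hM n₀ h)
  set N := Nat.findGreatest (fun n => x.1 n ≠ y.1 n) M
  have hN : x.1 N ≠ y.1 N := Nat.findGreatest_spec (P := fun n => x.1 n ≠ y.1 n) hn₀M hn₀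
  have hup : ∀ n, N < n → x.1 n = y.1 n := by
    intro n hn
    by_cases h : n ≤ M
    · by_contra hc
      exact Nat.findGreatest_is_greatest hn h hc
    · exact hM n (by omega)
  have htgt : B.tgt (x.1 N) = B.tgt (y.1 N) := by
    rw [x.2 N, y.2 N, hup (N + 1) (by omega)]
  rcases B.elt_total N _ _ htgt hN with h | h
  · exact Or.inl ⟨N, h, hup⟩
  · exact Or.inr ⟨N, h, fun n hn => (hup n hn).symm⟩

theorem IsSuccessor.eq {x y y' : B.PathSpace} (hy : B.IsSuccessor x y)
    (hy' : B.IsSuccessor x y') : y = y' := by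
  by_contra hne
  obtain ⟨N, -, hN⟩ := hy.1
  obtain ⟨N', -, hN'⟩ := hy'.1
  rcases pathLT_or_pathLT_of_ne hne (M := max N N')
      fun n hn => (hN n (by omega)).symm.trans (hN' n (by omega)) with h | h
  · exact hy'.2 y hy.1 h
  · exact hy.2 y' hy'.1 h

theorem IsVershik.isMinPath_iff {T : B.PathSpace ≃ B.PathSpace} (hT : B.IsVershik T)
    (x : B.PathSpace) : B.IsMinPath x ↔ ∀ y, ¬ B.pathLT y x := by
  refine ⟨fun hx y ⟨N, hN, _⟩ => hx N _ hN, fun h => ?_⟩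
  -- `x` is the image of its predecessor, which can only be the maximal path
  by_cases hmax : B.IsMaxPath (T.symm x)
  · simpa using hT.2 _ hmax
  · exact absurd (by simpa using (hT.1 _ hmax).1) (h (T.symm x))

theorem IsVershik.isMaxPath_iff {T : B.PathSpace ≃ B.PathSpace} (hT : B.IsVershik T)
    (x : B.PathSpace) : B.IsMaxPath x ↔ ∀ y, ¬ B.pathLT x y := by
  refine ⟨fun hx y ⟨N, hN, _⟩ => hx N _ hN, fun h => ?_⟩
  by_contra hmax
  exact h _ (hT.1 x hmax).1

theorem IsVershik.apply_equiv_eq_of_pathLT_iff {B' : BDiagram}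
    {T : B.PathSpace ≃ B.PathSpace} {T' : B'.PathSpace ≃ B'.PathSpace}
    (hT : B.IsVershik T) (hT' : B'.IsVershik T')
    (hmin : ∃! x, B.IsMinPath x) (e : B.PathSpace ≃ B'.PathSpace)
    (he : ∀ x y, B'.pathLT (e x) (e y) ↔ B.pathLT x y) (x : B.PathSpace) :
    T' (e x) = e (T x) := by
  by_cases hx : B.IsMaxPath x
  · obtain ⟨x₀, -, hx₀⟩ := hmin
    have hmin_e : ∀ w, B'.IsMinPath w → e.symm w = x₀ := fun w hw =>
      hx₀ _ <| (hT.isMinPath_iff _).2 fun y => by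
        have h := (hT'.isMinPath_iff w).1 hw (e y)
        rwa [← e.apply_symm_apply w, he] at h
    have hmax_e : B'.IsMaxPath (e x) := (hT'.isMaxPath_iff _).2 <|
      e.forall_congr_right.1 fun y => by simpa [he] using (hT.isMaxPath_iff x).1 hx y
    rw [← e.apply_symm_apply (T' (e x)), hmin_e _ (hT'.2 _ hmax_e),
      ← hx₀ _ (hT.2 x hx)]
  · have hsucc : B'.IsSuccessor (e x) (e (T x)) := by
      obtain ⟨hlt, hleast⟩ := hT.1 x hx
      refine ⟨(he _ _).2 hlt, e.forall_congr_right.1 fun z => ?_⟩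
      simpa [he] using hleast z
    have hx' : ¬ B'.IsMaxPath (e x) := fun h =>
      (hT'.isMaxPath_iff _).1 h _ hsucc.1
    exact IsSuccessor.eq (hT'.1 _ hx') hsucc

variable {ns : ℕ → ℕ} {hmono : StrictMono ns} {h0 : ns 0 = 0}

theorem castE_heq {m n : ℕ} (h : m = n) (e : B.E m) : HEq (B.castE h e) e := by
  subst h; rfl

theorem castV_apply {g : ∀ n, B.V n} {m n : ℕ} (h : m = n) : B.castV h (g m) = g n := by
  subst h; rfl

theorem telescope_val_heq (z : (B.Telescope ns hmono h0).PathSpace) {l l' i i' : ℕ}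
    (hl : l = l') (hi : i = i') (h : i < ns (l + 1) - ns l) (h' : i' < ns (l' + 1) - ns l') :
    HEq ((z.1 l).1 ⟨i, h⟩) ((z.1 l').1 ⟨i', h'⟩) := by
  subst hl hi; rfl

variable (hmono h0) in
noncomputable def flattenEdge (z : (B.Telescope ns hmono h0).PathSpace) (n : ℕ) : B.E n :=
  have h := hmono.exists_le_and_lt_succ h0 n
  B.castE (Nat.add_sub_cancel' h.choose_spec.1)
    ((z.1 h.choose).1 ⟨n - ns h.choose, by have := h.choose_spec; omega⟩)

theorem flattenEdge_eq (z : (B.Telescope ns hmono h0).PathSpace) {l i : ℕ}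
    (hi : i < ns (l + 1) - ns l) : B.flattenEdge hmono h0 z (ns l + i) = (z.1 l).1 ⟨i, hi⟩ := by
  have h := hmono.exists_le_and_lt_succ h0 (ns l + i)
  have hl : h.choose = l := hmono.eq_of_le_of_lt_succ h.choose_spec.1 h.choose_spec.2
    (by omega) (by omega)
  exact eq_of_heq ((B.castE_heq _ _).trans (telescope_val_heq z hl (by rw [hl]; omega) _ _))

theorem tgt_flattenEdge (z : (B.Telescope ns hmono h0).PathSpace) (n : ℕ) :
    B.tgt (B.flattenEdge hmono h0 z n) = B.src (B.flattenEdge hmono h0 z (n + 1)) := by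
  obtain ⟨l, i, hi, rfl⟩ := hmono.exists_add_eq h0 n
  rw [flattenEdge_eq z hi]
  by_cases hlast : i + 1 < ns (l + 1) - ns l
  · show _ = B.src (B.flattenEdge hmono h0 z (ns l + (i + 1)))
    rw [flattenEdge_eq z hlast]
    exact (z.1 l).2 i hlast
  · -- the last edge of block `l` is followed by the first edge of block `l + 1`
    obtain rfl : i = ns (l + 1) - ns l - 1 := by omega
    have hsucc : ns (l + 1) < ns (l + 1 + 1) := hmono (lt_add_one _)
    have hnext : B.src ((z.1 (l + 1)).1 ⟨0, by omega⟩)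
        = B.src (B.flattenEdge hmono h0 z (ns (l + 1) + 0)) := by
      rw [flattenEdge_eq z]
    refine B.castV_inj (by omega) ((z.2 l).trans (hnext.trans ?_))
    exact (castV_apply (g := fun n => B.src (B.flattenEdge hmono h0 z n)) (by omega)).symm

variable (B hmono h0) in
noncomputable def telescopeEquiv : B.PathSpace ≃ (B.Telescope ns hmono h0).PathSpace where
  toFun := B.teleMap ns hmono h0
  invFun z := ⟨B.flattenEdge hmono h0 z, B.tgt_flattenEdge z⟩
  left_inv x := Subtype.ext <| funext fun n => by
    obtain ⟨l, i, hi, rfl⟩ := hmono.exists_add_eq h0 n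
    exact flattenEdge_eq _ hi
  right_inv z := Subtype.ext <| funext fun l => Subtype.ext <| funext fun i =>
    flattenEdge_eq z i.2

theorem teleMap_val_eq_iff {x y : B.PathSpace} {l : ℕ} :
    (B.teleMap ns hmono h0 x).1 l = (B.teleMap ns hmono h0 y).1 l ↔
      ∀ i, i < ns (l + 1) - ns l → x.1 (ns l + i) = y.1 (ns l + i) :=
  ⟨fun h i hi => congrFun (congrArg Subtype.val h) ⟨i, hi⟩,
    fun h => Subtype.ext <| funext fun i => h i.1 i.2⟩

theorem pathLT_teleMap_iff (x y : B.PathSpace) :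
    (B.Telescope ns hmono h0).pathLT (B.teleMap ns hmono h0 x) (B.teleMap ns hmono h0 y) ↔
      B.pathLT x y := by
  constructor
  · rintro ⟨L, ⟨N, hN, hlt, hblock⟩, habove⟩
    refine ⟨ns L + N, hlt, fun n hn => ?_⟩
    obtain ⟨l, i, hi, rfl⟩ := hmono.exists_add_eq h0 n
    rcases lt_trichotomy l L with h | rfl | h
    · have := hmono.monotone (show l + 1 ≤ L by omega); omega
    · exact hblock i hi (by omega)
    · exact teleMap_val_eq_iff.1 (habove l h) i hi
  · rintro ⟨N, hlt, habove⟩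
    obtain ⟨l, i, hi, rfl⟩ := hmono.exists_add_eq h0 N
    refine ⟨l, ⟨i, hi, hlt, fun i' _ hi' => habove (ns l + i') (by omega)⟩, fun m hm => ?_⟩
    have := hmono.monotone (show l + 1 ≤ m by omega)
    exact teleMap_val_eq_iff.2 fun i' _ => habove _ (by omega)

theorem forall_isMinEdge_teleMap {x : B.PathSpace} {j : ℕ}
    (hx : ∀ n, n < ns j → B.IsMinEdge (x.1 n)) (l : ℕ) (hl : l < j) :
    (B.Telescope ns hmono h0).IsMinEdge ((B.teleMap ns hmono h0 x).1 l) := by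
  rintro g ⟨N, hN, hlt, -⟩
  exact (hmono.forall_lt_iff_forall_blocks h0 _ j).1 hx l hl N hN _ hlt

theorem SameCoding.mono {T : B.PathSpace ≃ B.PathSpace} {k k' : ℕ} {x y : B.PathSpace}
    (h : B.SameCoding T k x y) (hk : k' ≤ k) : B.SameCoding T k' x y :=
  fun m i hi => h m i (lt_of_lt_of_le hi hk)

section Coding

variable {T : B.PathSpace ≃ B.PathSpace}
  {T' : (B.Telescope ns hmono h0).PathSpace ≃ (B.Telescope ns hmono h0).PathSpace}
  (hconj : ∀ x, T' (B.teleMap ns hmono h0 x) = B.teleMap ns hmono h0 (T x))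
include hconj

theorem iterZ_teleMap (m : ℤ) (x : B.PathSpace) :
    (B.Telescope ns hmono h0).iterZ T' m (B.teleMap ns hmono h0 x) =
      B.teleMap ns hmono h0 (B.iterZ T m x) :=
  Equiv.Perm.zpow_apply_of_semiconj (B.telescopeEquiv hmono h0) hconj m x

theorem sameCoding_teleMap_iff (r : ℕ) (x y : B.PathSpace) :
    (B.Telescope ns hmono h0).SameCoding T' r (B.teleMap ns hmono h0 x) (B.teleMap ns hmono h0 y)
      ↔ B.SameCoding T (ns r) x y := by
  refine forall_congr' fun m => ?_
  rw [hmono.forall_lt_iff_forall_blocks h0]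
  refine forall₂_congr fun l _ => ?_
  rw [iterZ_teleMap hconj, iterZ_teleMap hconj, teleMap_val_eq_iff]

theorem DepthPair.teleMap {k l : ℕ} {x y : B.PathSpace} (h : B.DepthPair T k x y)
    (hlk : ns l ≤ k) (hkl : k < ns (l + 1)) :
    (B.Telescope ns hmono h0).DepthPair T' l (B.teleMap ns hmono h0 x) (B.teleMap ns hmono h0 y) :=
  ⟨(B.telescopeEquiv hmono h0).injective.ne h.1,
    (sameCoding_teleMap_iff hconj l x y).2 (h.2.1.mono hlk),
    fun hc => h.2.2 (((sameCoding_teleMap_iff hconj (l + 1) x y).1 hc).mono hkl)⟩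

theorem HasCut.teleMap {j : ℕ} {x y : B.PathSpace} (h : B.HasCut T (ns j) x y) :
    (B.Telescope ns hmono h0).HasCut T' j (B.teleMap ns hmono h0 x) (B.teleMap ns hmono h0 y) := by
  obtain ⟨m, hx, hy⟩ := h
  refine ⟨m, ?_, ?_⟩ <;> rw [iterZ_teleMap hconj]
  exacts [forall_isMinEdge_teleMap hx, forall_isMinEdge_teleMap hy]

end Coding

end BDiagram

theorem weaklyWellTimed_telescoping_general
    (B : BDiagram) (T : B.PathSpace ≃ B.PathSpace)
    (hproper : B.ProperlyOrdered) (hT : B.IsVershik T)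
    (ns : ℕ → ℕ) (hmono : StrictMono ns) (h0 : ns 0 = 0)
    (T' : (B.Telescope ns hmono h0).PathSpace ≃ (B.Telescope ns hmono h0).PathSpace)
    (hT' : (B.Telescope ns hmono h0).IsVershik T')
    (hww : B.WeaklyWellTimed T) :
    (B.Telescope ns hmono h0).WeaklyWellTimed T' := by
  have hconj : ∀ x, T' (B.teleMap ns hmono h0 x) = B.teleMap ns hmono h0 (T x) :=
    hT.apply_equiv_eq_of_pathLT_iff hT' hproper.1 (B.telescopeEquiv hmono h0)
      BDiagram.pathLT_teleMap_iff
  intro K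
  obtain ⟨k, hKk, -, hk⟩ := hww (ns (max K 1))
  obtain ⟨l, hlk, hkl⟩ := hmono.exists_le_and_lt_succ h0 k
  have hKl : max K 1 < l + 1 := hmono.lt_iff_lt.1 (by omega)
  refine ⟨l, by omega, by omega, fun j hj => ?_⟩
  have hkj : k < ns j := by have := hmono.monotone (show l + 1 ≤ j by omega); omega
  obtain ⟨x, y, hxy, hcut⟩ := hk (ns j) hkj
  exact ⟨_, _, hxy.teleMap hconj hlk hkl, hcut.teleMap hconj⟩

/-- If a simple, properly ordered Bratteli–Vershik system is
weakly well timed, then every telescoping of it is weakly well timed. -/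
theorem weaklyWellTimed_telescoping
    (B : BDiagram) (T : B.PathSpace ≃ B.PathSpace)
    (hproper : B.ProperlyOrdered) (hsimple : B.Simple) (hT : B.IsVershik T)
    (ns : ℕ → ℕ) (hmono : StrictMono ns) (h0 : ns 0 = 0)
    (T' : (B.Telescope ns hmono h0).PathSpace ≃ (B.Telescope ns hmono h0).PathSpace)
    (hT' : (B.Telescope ns hmono h0).IsVershik T')
    (hww : B.WeaklyWellTimed T) :
    (B.Telescope ns hmono h0).WeaklyWellTimed T' :=
  weaklyWellTimed_telescoping_general B T hproper hT ns hmono h0 T' hT' hww
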